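/- arXiv:1611.03644 — 4 statements merged into one kernel-verified Lean document; each statement's English description precedes it below -/
import Mathlib

section
/- Let n, k ≥ 1 and let q : U(1) × SU(n) → U(n) be the map q(z, A) = z·A. A k-tuple of elements of a topological group pairwise commutes in U(1) × SU(n) if and only if its image tuple under q pairwise commutes in U(n); the induced map C_k(U(1) × SU(n)) → C_k(U(n)), applying q in each coordinate, is a covering map, and each of its fibers has exactly nᵏ elements. -/
/-!
The map `q(z, A) = z • A` is a continuous surjective homomorphism from the compact group
`U(1) × SU(n)` onto `U(n)` whose kernel `{(ζ, ζ⁻¹ • 1) : ζⁿ = 1}` has order `n`. A continuous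
surjection from a compact space onto a Hausdorff space is a quotient map, and a quotient
homomorphism with discrete kernel is a covering map; the same applies to
`qᵏ : (U(1) × SU(n))ᵏ → U(n)ᵏ`, whose kernel has order `nᵏ`. Since `z • A` and `w • B` commute
exactly when `A` and `B` do, `C_k(U(1) × SU(n))` is the full preimage of `C_k(U(n))` under `qᵏ`,
and restricting a covering map to a full preimage gives a covering map with the same fibers.
-/

/-- `commTuples G k` is the space `C_k(G) ≅ Hom(ℤᵏ, G)` of `k`-tuples of pairwise commuting
elements of `G`, topologized as a subspace of `Gᵏ`. -/
def commTuples (G : Type*) [Monoid G] [TopologicalSpace G] (k : ℕ) : Type _ :=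
  {f : Fin k → G // ∀ i j, Commute (f i) (f j)}

instance (G : Type*) [Monoid G] [TopologicalSpace G] (k : ℕ) :
    TopologicalSpace (commTuples G k) :=
  instTopologicalSpaceSubtype

open Topology

theorem MonoidHom.isCoveringMap_of_compactSpace {G H : Type*} [Group G] [TopologicalSpace G]
    [IsTopologicalGroup G] [CompactSpace G] [T2Space G] [Group H] [TopologicalSpace H]
    [T2Space H] (q : G →* H) (hcont : Continuous q) (hsurj : Function.Surjective q)
    [Finite q.ker] : IsCoveringMap q :=
  (IsQuotientMap.of_surjective_continuous hsurj hcont)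
    |>.isQuotientCoveringMap_of_isDiscrete_ker_monoidHom (Set.toFinite _).isDiscrete
    |>.isCoveringMap

def MonoidHom.kerCompLeftEquiv {G H : Type*} [Group G] [MulOneClass H] (q : G →* H)
    (ι : Type*) : (q.compLeft ι).ker ≃ (ι → q.ker) :=
  (Equiv.subtypeEquivRight fun _ => by simp [funext_iff]).trans
    (Equiv.subtypePiEquivPi (p := fun _ g => g ∈ q.ker))

namespace commTuples

section Map

variable {G H : Type*} [Monoid G] [TopologicalSpace G] [Monoid H] [TopologicalSpace H]

def map (q : G →* H) (k : ℕ) : commTuples G k → commTuples H k :=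
  fun f => ⟨fun i => q (f.1 i), fun i j => (f.2 i j).map q⟩

end Map

variable {G H : Type*} [Group G] [TopologicalSpace G] [Group H] [TopologicalSpace H]
  {q : G →* H} (hq : ∀ x y, Commute (q x) (q y) → Commute x y) (k : ℕ)
include hq

def homeomorphPreimageCompLeft :
    commTuples G k ≃ₜ q.compLeft (Fin k) ⁻¹' {f | ∀ i j, Commute (f i) (f j)} :=
  (Homeomorph.refl _).subtype fun _ => ⟨fun h i j => (h i j).map q, fun h i j => hq _ _ (h i j)⟩

def mapFiberEquiv (g : commTuples H k) : map q k ⁻¹' {g} ≃ q.compLeft (Fin k) ⁻¹' {g.1} :=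
  (Equiv.subtypeEquivRight fun _ => Subtype.ext_iff).trans <|
    Equiv.subtypeSubtypeEquivSubtype fun {f} (h : q.compLeft (Fin k) f = g.1) i j =>
      hq _ _ (by simpa [← h] using g.2 i j)

theorem isCoveringMap_map [IsTopologicalGroup G] [CompactSpace G] [T2Space G] [T2Space H]
    (hcont : Continuous q) (hsurj : Function.Surjective q) [Finite q.ker] :
    IsCoveringMap (map q k) := by
  have : Finite (q.compLeft (Fin k)).ker := .of_equiv _ (q.kerCompLeftEquiv (Fin k)).symm
  have hprod : IsCoveringMap (q.compLeft (Fin k)) :=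
    (q.compLeft (Fin k)).isCoveringMap_of_compactSpace
      (continuous_pi fun i => hcont.comp (continuous_apply i)) hsurj.comp_left
  exact (hprod.restrictPreimage _).comp_homeomorph (homeomorphPreimageCompLeft hq k)

theorem card_map_preimage_singleton (hsurj : Function.Surjective q) (g : commTuples H k) :
    Nat.card (map q k ⁻¹' {g}) = Nat.card q.ker ^ k := by
  rw [Nat.card_congr ((mapFiberEquiv hq k g).trans
      ((q.compLeft (Fin k)).fiberEquivKerOfSurjective hsurj.comp_left g.1)),
    Nat.card_congr (q.kerCompLeftEquiv (Fin k)), Nat.card_fun, Nat.card_fin]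

end commTuples

theorem Circle.coe_mem_unitary (z : Circle) : (z : ℂ) ∈ unitary ℂ := by
  simp [Unitary.mem_iff, ← Circle.coe_inv_eq_conj]

namespace Matrix

section Compact

variable {ι 𝕜 : Type*} [Fintype ι] [DecidableEq ι] [RCLike 𝕜]

theorem isCompact_unitaryGroup : IsCompact (unitaryGroup ι 𝕜 : Set (Matrix ι ι 𝕜)) :=
  (isCompact_univ_pi fun _ => isCompact_univ_pi fun _ => isCompact_closedBall (0 : 𝕜) 1)
    |>.of_isClosed_subset (isClosed_unitary (R := Matrix ι ι 𝕜)) fun U hU i _ j _ => by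
      simpa using entry_norm_bound_of_unitary hU i j

theorem isCompact_specialUnitaryGroup :
    IsCompact (specialUnitaryGroup ι 𝕜 : Set (Matrix ι ι 𝕜)) :=
  isCompact_unitaryGroup.inter_right (isClosed_eq continuous_id.matrix_det continuous_const)

instance : CompactSpace (specialUnitaryGroup ι 𝕜) :=
  isCompact_iff_compactSpace.mp isCompact_specialUnitaryGroup

instance : IsTopologicalGroup (specialUnitaryGroup ι 𝕜) where
  continuous_inv := continuous_subtype_val.star.subtype_mk _

end Compact

variable {ι : Type*} [Fintype ι] [DecidableEq ι]

theorem smul_mem_unitaryGroup (z : Circle) {U : Matrix ι ι ℂ} (hU : U ∈ unitaryGroup ι ℂ) :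
    z • U ∈ unitaryGroup ι ℂ :=
  Unitary.smul_mem_of_mem (R := ℂ) z.coe_mem_unitary hU

theorem inv_smul_mem_specialUnitaryGroup {z : Circle} {U : Matrix ι ι ℂ}
    (hU : U ∈ unitaryGroup ι ℂ) (hz : (z : ℂ) ^ Fintype.card ι = U.det) :
    z⁻¹ • U ∈ specialUnitaryGroup ι ℂ :=
  ⟨smul_mem_unitaryGroup z⁻¹ hU, by simp [Circle.smul_def, ← hz]⟩

variable (ι) in
noncomputable def circleSmul : Circle × specialUnitaryGroup ι ℂ →* unitaryGroup ι ℂ where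
  toFun x := ⟨x.1 • (x.2 : Matrix ι ι ℂ), smul_mem_unitaryGroup x.1 x.2.2.1⟩
  map_one' := Subtype.ext (one_smul _ _)
  map_mul' x y := Subtype.ext (smul_mul_smul_comm x.1 (x.2 : Matrix ι ι ℂ) y.1 y.2).symm

theorem coe_circleSmul (x : Circle × specialUnitaryGroup ι ℂ) :
    (circleSmul ι x : Matrix ι ι ℂ) = x.1 • (x.2 : Matrix ι ι ℂ) := rfl

theorem continuous_circleSmul : Continuous (circleSmul ι) :=
  (continuous_fst.smul (continuous_subtype_val.comp continuous_snd)).subtype_mk _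

theorem commute_circleSmul_iff {x y : Circle × specialUnitaryGroup ι ℂ} :
    Commute (circleSmul ι x) (circleSmul ι y) ↔ Commute x y := by
  rw [Prod.commute_iff, and_iff_right (Commute.all _ _), ← Submonoid.commute_coe_coe,
    ← Submonoid.commute_coe_coe, coe_circleSmul, coe_circleSmul, Commute.smul_left_iff,
    Commute.smul_right_iff]

theorem circleSmul_surjective [Nonempty ι] : Function.Surjective (circleSmul ι) := by
  intro U
  have : NeZero (Fintype.card ι) := ⟨Fintype.card_ne_zero⟩
  obtain ⟨z, hz⟩ := (Circle.isQuotientCoveringMap_npow (Fintype.card ι)).surjective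
    ⟨(U : Matrix ι ι ℂ).det,
      mem_sphere_zero_iff_norm.2 (CStarRing.norm_of_mem_unitary (det_of_mem_unitary U.2))⟩
  exact ⟨(z, ⟨z⁻¹ • U, inv_smul_mem_specialUnitaryGroup U.2 (congrArg Subtype.val hz)⟩),
    Subtype.ext (smul_inv_smul z _)⟩

theorem mem_ker_circleSmul {x : Circle × specialUnitaryGroup ι ℂ} :
    x ∈ (circleSmul ι).ker ↔ (x.2 : Matrix ι ι ℂ) = x.1⁻¹ • 1 := by
  rw [MonoidHom.mem_ker, Subtype.ext_iff, coe_circleSmul, eq_inv_smul_iff]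
  rfl

theorem card_ker_circleSmul [Nonempty ι] : Nat.card (circleSmul ι).ker = Fintype.card ι := by
  have : NeZero (Fintype.card ι) := ⟨Fintype.card_ne_zero⟩
  have hpow {x : Circle × specialUnitaryGroup ι ℂ} (hx : x ∈ (circleSmul ι).ker) :
      x.1 ^ Fintype.card ι = 1 := by
    have hdet : x.1⁻¹ ^ Fintype.card ι = 1 :=
      Circle.ext (by simpa [Circle.smul_def, det_smul, mem_ker_circleSmul.1 hx] using x.2.2.2)
    simpa using hdet
  rw [← HasEnoughRootsOfUnity.natCard_rootsOfUnity Circle (Fintype.card ι)]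
  refine Nat.card_eq_of_bijective (fun x => ⟨toUnits x.1.1, ?_⟩) ⟨fun x y hxy => ?_, fun ζ => ?_⟩
  · rw [mem_rootsOfUnity, ← map_pow, hpow x.2, map_one]
  · have h1 : x.1.1 = y.1.1 := toUnits.injective (congrArg Subtype.val hxy)
    have h2 : x.1.2 = y.1.2 := Subtype.ext <| by
      rw [mem_ker_circleSmul.1 x.2, mem_ker_circleSmul.1 y.2, h1]
    exact Subtype.ext (Prod.ext h1 h2)
  · set z : Circle := (ζ : Circleˣ).val
    have hz : z ^ Fintype.card ι = 1 := by simpa using congrArg Units.val ζ.2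
    refine ⟨⟨(z, ⟨z⁻¹ • 1, inv_smul_mem_specialUnitaryGroup (one_mem _) ?_⟩), ?_⟩, ?_⟩
    · rw [det_one, ← Circle.coe_pow, hz, Circle.coe_one]
    · exact mem_ker_circleSmul.2 rfl
    · exact Subtype.ext (toUnits_val_apply _)

end Matrix

theorem commTuples_covering_general (n k : ℕ) (hn : 1 ≤ n)
    (q : Circle × Matrix.specialUnitaryGroup (Fin n) ℂ → Matrix.unitaryGroup (Fin n) ℂ)
    (hq : ∀ (z : Circle) (A : Matrix.specialUnitaryGroup (Fin n) ℂ),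
      ((q (z, A) : Matrix (Fin n) (Fin n) ℂ)) = (z : ℂ) • (A : Matrix (Fin n) (Fin n) ℂ))
    (Q : commTuples (Circle × Matrix.specialUnitaryGroup (Fin n) ℂ) k →
      commTuples (Matrix.unitaryGroup (Fin n) ℂ) k)
    (hQ : ∀ f i, (Q f).1 i = q (f.1 i)) :
    (∀ f : Fin k → Circle × Matrix.specialUnitaryGroup (Fin n) ℂ,
      (∀ i j, Commute (f i) (f j)) ↔ (∀ i j, Commute (q (f i)) (q (f j)))) ∧
    IsCoveringMap Q ∧
    (∀ g : commTuples (Matrix.unitaryGroup (Fin n) ℂ) k,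
      Nat.card (Q ⁻¹' {g}) = n ^ k) := by
  open Matrix in
  have : Nonempty (Fin n) := ⟨⟨0, hn⟩⟩
  obtain rfl : q = circleSmul (Fin n) := funext fun x => Subtype.ext (hq x.1 x.2)
  obtain rfl : Q = commTuples.map (circleSmul (Fin n)) k :=
    funext fun f => Subtype.ext (funext (hQ f))
  have hcomm x y : Commute (circleSmul (Fin n) x) (circleSmul (Fin n) y) → Commute x y :=
    commute_circleSmul_iff.1
  have : Finite (circleSmul (Fin n)).ker :=
    Nat.finite_of_card_ne_zero (by rw [card_ker_circleSmul, Fintype.card_fin]; omega)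
  refine ⟨fun f => forall₂_congr fun _ _ => commute_circleSmul_iff.symm,
    commTuples.isCoveringMap_map hcomm k continuous_circleSmul circleSmul_surjective, fun g => ?_⟩
  rw [commTuples.card_map_preimage_singleton hcomm k circleSmul_surjective g,
    card_ker_circleSmul, Fintype.card_fin]

/-- Let `q : U(1) × SU(n) → U(n)` be the map `q(z, A) = z·A`.  A `k`-tuple pairwise commutes
in `U(1) × SU(n)` if and only if its image tuple under `q` pairwise commutes in `U(n)`; the
induced map `C_k(U(1) × SU(n)) → C_k(U(n))`, applying `q` in each coordinate, is a covering
map, and each of its fibers has exactly `nᵏ` elements. -/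
theorem commTuples_covering (n k : ℕ) (hn : 1 ≤ n) (hk : 1 ≤ k)
    (q : Circle × Matrix.specialUnitaryGroup (Fin n) ℂ → Matrix.unitaryGroup (Fin n) ℂ)
    (hq : ∀ (z : Circle) (A : Matrix.specialUnitaryGroup (Fin n) ℂ),
      ((q (z, A) : Matrix (Fin n) (Fin n) ℂ)) = (z : ℂ) • (A : Matrix (Fin n) (Fin n) ℂ))
    (Q : commTuples (Circle × Matrix.specialUnitaryGroup (Fin n) ℂ) k →
      commTuples (Matrix.unitaryGroup (Fin n) ℂ) k)
    (hQ : ∀ f i, (Q f).1 i = q (f.1 i)) :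
    (∀ f : Fin k → Circle × Matrix.specialUnitaryGroup (Fin n) ℂ,
      (∀ i j, Commute (f i) (f j)) ↔ (∀ i j, Commute (q (f i)) (q (f j)))) ∧
    IsCoveringMap Q ∧
    (∀ g : commTuples (Matrix.unitaryGroup (Fin n) ℂ) k,
      Nat.card (Q ⁻¹' {g}) = n ^ k) :=
  commTuples_covering_general n k hn q hq Q hQ
end

section
/- Let b and k be natural numbers with k ≤ b. Work in the multivariate polynomial ring MvPolynomial (Fin b) (Polynomial ℤ), and write u for the coefficient variable Polynomial.X and e_j for the j-th elementary symmetric polynomial in the b variables. Then the coefficient of the squarefree monomial X₁·X₂⋯X_b (exponent vector constantly 1) in the polynomial ( ∑_{j=1}^{b} C(u^{j−1}) · e_j )^k equals u^{b−k} · N, where N is the number of surjective functions from Fin b to Fin k. -/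
/-!
Writing `e_j = ∑_{|S| = j} x^S` with `x^S = ∏_{s ∈ S} x_s`, the `k`-th power expands into a sum
over `k`-tuples `(S₁, …, S_k)` of nonempty subsets of terms `∏ᵢ u^{|Sᵢ|-1} x^{Sᵢ}`. Such a term
contributes to `x₁⋯x_b` exactly when the `Sᵢ` partition `Fin b`, i.e. when `Sᵢ = f⁻¹(i)` for a
surjection `f : Fin b → Fin k`, and it then contributes `u^{∑ᵢ (|f⁻¹(i)| - 1)} = u^{b-k}`.
-/

open Finset MvPolynomial

namespace MvPolynomial

variable {σ R : Type*} [CommSemiring R]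

lemma prod_X_eq_monomial (S : Finset σ) :
    ∏ x ∈ S, (X x : MvPolynomial σ R) = monomial (∑ x ∈ S, Finsupp.single x 1) 1 := by
  simp_rw [monomial_sum_one, ← X_pow_eq_monomial, pow_one]

lemma sum_C_mul_esymm_eq_sum_finset [Fintype σ] (J : Finset ℕ) (w : ℕ → R) :
    ∑ j ∈ J, C (w j) * esymm σ R j =
      ∑ S : Finset σ, C (if #S ∈ J then w #S else 0) * ∏ x ∈ S, X x := by
  simp_rw [apply_ite C, map_zero, ite_mul, zero_mul, ← sum_filter, esymm, mul_sum]
  rw [← sum_fiberwise_of_maps_to (g := card) (t := J) fun S hS => (mem_filter.1 hS).2]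
  refine sum_congr rfl fun j hj => sum_congr ?_ fun S hS => by rw [(mem_filter.1 hS).2]
  ext S
  simp +contextual [hj]

end MvPolynomial

section Fibers

variable {σ ι : Type*} [Fintype σ] [DecidableEq σ] [Fintype ι]

lemma Finsupp.sum_sum_single_eq_one_iff (g : ι → Finset σ) :
    ∑ i, ∑ x ∈ g i, Finsupp.single x 1 = Finsupp.equivFunOnFinite.symm (fun _ => 1) ↔
      ∀ x, ∃! i, x ∈ g i := by
  rw [Finsupp.ext_iff]
  refine forall_congr' fun x => ?_
  simp [Finsupp.finsetSum_apply, Finsupp.single_apply, Fintype.existsUnique_iff_card_one]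

variable [DecidableEq ι]

open Classical in
lemma Finset.sum_existsUnique_mem_eq_sum_fibers {M : Type*} [AddCommMonoid M]
    (F : (ι → Finset σ) → M) :
    ∑ g with ∀ x, ∃! i, x ∈ g i, F g = ∑ f : σ → ι, F fun i => {x | f x = i} := by
  have hinj : Function.Injective fun (f : σ → ι) i => ({x | f x = i} : Finset σ) := by
    intro f f' h
    funext x
    have hx := congrFun h (f x)
    simp only [Finset.ext_iff, mem_filter_univ] at hx
    exact ((hx x).1 rfl).symm
  have himage : univ.image (fun (f : σ → ι) i => ({x | f x = i} : Finset σ)) =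
      ({g | ∀ x, ∃! i, x ∈ g i} : Finset (ι → Finset σ)) := by
    ext g
    simp only [mem_image, mem_univ, true_and, mem_filter_univ]
    constructor
    · rintro ⟨f, rfl⟩ x
      exact ⟨f x, by simp, fun i hi => by simpa [eq_comm] using hi⟩
    · intro hg
      choose f hf huniq using hg
      exact ⟨f, funext fun i => ext fun x => by simpa using ⟨(· ▸ hf x), (huniq x i · |>.symm)⟩⟩
  rw [← himage, sum_image fun f _ f' _ h => hinj h]

lemma MvPolynomial.coeff_prod_sum_C_mul_prod_X {R : Type*} [CommSemiring R]
    (c : ι → Finset σ → R) :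
    coeff (Finsupp.equivFunOnFinite.symm fun _ => 1)
      (∏ i, ∑ S : Finset σ, C (c i S) * ∏ x ∈ S, X x) =
      ∑ f : σ → ι, ∏ i, c i {x | f x = i} := by
  classical
  simp_rw [prod_X_eq_monomial, C_mul_monomial, mul_one, Fintype.prod_sum, ← monomial_sum_prod,
    coeff_sum, coeff_monomial, Finsupp.sum_sum_single_eq_one_iff, ← sum_filter]
  exact sum_existsUnique_mem_eq_sum_fibers _

end Fibers

section Surjections

variable {σ ι R : Type*} [Fintype σ] [Fintype ι] [DecidableEq ι] [CommMonoidWithZero R]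

lemma Function.Surjective.prod_pow_card_fiber_sub_one {f : σ → ι} (hf : Function.Surjective f)
    (a : R) : ∏ i, a ^ (#{x | f x = i} - 1) = a ^ (Fintype.card σ - Fintype.card ι) := by
  rw [prod_pow_eq_pow_sum, sum_tsub_distrib _ fun i _ => ?_, ← card_eq_sum_card_fiberwise (by simp)]
  · simp
  · obtain ⟨x, rfl⟩ := hf i
    exact card_pos.2 ⟨x, by simp⟩

lemma prod_ite_card_fiber_mem_Icc (f : σ → ι) (a : R) :
    ∏ i, (if #{x | f x = i} ∈ Icc 1 (Fintype.card σ) then a ^ (#{x | f x = i} - 1) else 0) =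
      if Function.Surjective f then a ^ (Fintype.card σ - Fintype.card ι) else 0 := by
  split_ifs with hf
  · rw [← hf.prod_pow_card_fiber_sub_one]
    refine prod_congr rfl fun i _ => if_pos (mem_Icc.2 ⟨?_, card_le_univ _⟩)
    obtain ⟨x, rfl⟩ := hf i
    exact card_pos.2 ⟨x, by simp⟩
  · obtain ⟨i, hi⟩ := not_forall.1 hf
    refine prod_eq_zero (mem_univ i) (if_neg fun h => ?_)
    obtain ⟨x, hx⟩ := card_pos.1 (mem_Icc.1 h).1
    exact hi ⟨x, (mem_filter_univ x).1 hx⟩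

end Surjections

theorem coeff_of_power_of_twisted_esymm_general (b k : ℕ) :
    MvPolynomial.coeff (Finsupp.equivFunOnFinite.symm fun _ : Fin b => 1)
      ((∑ j ∈ Icc 1 b, MvPolynomial.C (Polynomial.X ^ (j - 1)) *
        MvPolynomial.esymm (Fin b) (Polynomial ℤ) j) ^ k) =
      Polynomial.X ^ (b - k) *
        (Fintype.card {f : Fin b → Fin k // Function.Surjective f} : Polynomial ℤ) := by
  rw [sum_C_mul_esymm_eq_sum_finset, ← Fin.prod_const, coeff_prod_sum_C_mul_prod_X]
  have hfiber (f : Fin b → Fin k) := prod_ite_card_fiber_mem_Icc f (Polynomial.X : Polynomial ℤ)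
  simp only [Fintype.card_fin] at hfiber
  simp_rw [hfiber]
  rw [sum_ite, sum_const_zero, add_zero, sum_const, nsmul_eq_mul, mul_comm, Fintype.card_subtype]

/-- In `ℤ[u][x₁,…,x_b]`, the coefficient of the squarefree monomial `x₁·x₂⋯x_b` in
`(∑_{j=1}^{b} u^{j−1} e_j)^k` (with `e_j` the `j`-th elementary symmetric polynomial)
equals `u^{b−k}` times the number of surjections from a `b`-set onto a `k`-set, i.e.
`u^{b−k}·k!·S(b,k)`. -/
theorem coeff_of_power_of_twisted_esymm (b k : ℕ) (hk : k ≤ b) :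
    MvPolynomial.coeff (Finsupp.equivFunOnFinite.symm fun _ : Fin b => 1)
      ((∑ j ∈ Icc 1 b, MvPolynomial.C (Polynomial.X ^ (j - 1)) *
        MvPolynomial.esymm (Fin b) (Polynomial ℤ) j) ^ k) =
      Polynomial.X ^ (b - k) *
        (Fintype.card {f : Fin b → Fin k // Function.Surjective f} : Polynomial ℤ) :=
  coeff_of_power_of_twisted_esymm_general b k
end

section
/- Let R be a commutative ring, u ∈ R, and y : ℕ → R a sequence such that for every n ≥ 1 one has y 1 · y n = (n+1) • y (n+1) + n • (u · y n), where • denotes natural-number scalar multiplication. Then for every n ≥ 1: n! • y n = ∏_{j=0}^{n−1} ( y 1 − j • u ). -/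
open Finset

/-- If a sequence `y : ℕ → R` in a commutative ring satisfies the relations
`y₁·yₙ = (n+1)·y_{n+1} + n·u·yₙ` for all `n ≥ 1`, then for all `n ≥ 1` one has the
product presentation `n!·yₙ = ∏_{j=0}^{n−1} (y₁ − j·u)`. -/
theorem factorial_smul_y_eq_prod (R : Type*) [CommRing R] (u : R) (y : ℕ → R)
    (h : ∀ n, 1 ≤ n → y 1 * y n = (n + 1) • y (n + 1) + n • (u * y n)) :
    ∀ n, 1 ≤ n → n.factorial • y n = ∏ j ∈ range n, (y 1 - j • u) := by
  intro n hn
  induction n with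
  | zero => omega
  | succ n ih =>
    rcases Nat.eq_or_lt_of_le hn with h1 | h1
    · simp [← h1]
    · have hn1 : 1 ≤ n := by omega
      have key : (n + 1) • y (n + 1) = (y 1 - n • u) * y n := by
        have := h n hn1
        have : (n + 1) • y (n + 1) = y 1 * y n - n • (u * y n) := by
          rw [this]; ring
        rw [this, nsmul_eq_mul, nsmul_eq_mul]
        ring
      rw [prod_range_succ, ← ih hn1]
      rw [Nat.factorial_succ, mul_smul, smul_comm, key]
      simp only [nsmul_eq_mul, smul_eq_mul]
      ring
end

section
/- Let n ≥ 3. In the polynomial ring ℚ[x₁,…,xₙ, y₁,…,yₙ] (e.g. MvPolynomial (Fin n ⊕ Fin n) ℚ), the element ∑_{i=1}^{n} y_i³ does not lie in the ideal generated by ∑_{i=1}^{n} y_i together with the elementary symmetric polynomials e₁(x),…,eₙ(x) in the x-variables. -/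
open MvPolynomial

private noncomputable def gfun (n : ℕ) : Fin n ⊕ Fin n → ℚ
  | Sum.inl _ => 0
  | Sum.inr i => if (i : ℕ) = 0 then 1 else if (i : ℕ) = 1 then 1 else
      if (i : ℕ) = 2 then -2 else 0

private lemma sum_pow (n : ℕ) (hn : 3 ≤ n) (k : ℕ) (hk : 0 < k) :
    ∑ i : Fin n, (gfun n (Sum.inr i)) ^ k = 1 + 1 + (-2 : ℚ) ^ k := by
  have h : ∀ i : Fin n, (gfun n (Sum.inr i)) ^ k =
      (if (i : ℕ) = 0 then 1 else if (i : ℕ) = 1 then 1 else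
        if (i : ℕ) = 2 then (-2 : ℚ) ^ k else 0) := by
    intro i
    simp only [gfun]
    split_ifs <;> simp [zero_pow hk.ne']
  rw [Finset.sum_congr rfl (fun i _ => h i), Fin.sum_univ_eq_sum_range
    (fun j => if j = 0 then 1 else if j = 1 then 1 else if j = 2 then (-2:ℚ)^k else 0)]
  rw [← Finset.sum_range_add_sum_Ico _ hn]
  have : ∑ j ∈ Finset.Ico 3 n,
      (if j = 0 then 1 else if j = 1 then 1 else if j = 2 then (-2:ℚ)^k else 0) = 0 := by
    apply Finset.sum_eq_zero
    intro j hj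
    have := (Finset.mem_Ico.mp hj).1
    split_ifs <;> first | rfl | omega
  rw [this]
  norm_num [Finset.sum_range_succ]

/-- For `n ≥ 3`, in `ℚ[x₁,…,xₙ,y₁,…,yₙ]` the power sum `∑ yᵢ³` does not lie in the ideal
generated by `∑ yᵢ` and the elementary symmetric polynomials `e₁(x),…,eₙ(x)` in the
`x`-variables.  (Algebraic content of the non-torsion of `d_{2;n}` for `n ≥ 3`.) -/
theorem powerSum_cube_not_mem_ideal (n : ℕ) (hn : 3 ≤ n) :
    (∑ i : Fin n, (X (Sum.inr i) : MvPolynomial (Fin n ⊕ Fin n) ℚ) ^ 3) ∉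
      Ideal.span
        (insert (∑ i : Fin n, (X (Sum.inr i) : MvPolynomial (Fin n ⊕ Fin n) ℚ))
          (Set.range fun j : Fin n =>
            rename Sum.inl (esymm (Fin n) ℚ ((j : ℕ) + 1)))) := by
  intro hmem
  set φ := aeval (R := ℚ) (gfun n)
  have hker : Ideal.span
      (insert (∑ i : Fin n, (X (Sum.inr i) : MvPolynomial (Fin n ⊕ Fin n) ℚ))
        (Set.range fun j : Fin n =>
          rename Sum.inl (esymm (Fin n) ℚ ((j : ℕ) + 1)))) ≤
      RingHom.ker (φ : MvPolynomial (Fin n ⊕ Fin n) ℚ →+* ℚ) := by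
    rw [Ideal.span_le]
    rintro p (rfl | ⟨j, rfl⟩)
    · simp only [SetLike.mem_coe, RingHom.mem_ker, RingHom.coe_coe, map_sum, φ, aeval_X]
      have h1 := sum_pow n hn 1 one_pos
      simp only [pow_one] at h1
      rw [h1]; norm_num
    · simp only [SetLike.mem_coe, RingHom.mem_ker, RingHom.coe_coe, φ]
      rw [aeval_rename]
      have : (gfun n) ∘ Sum.inl = fun _ : Fin n => (0 : ℚ) := by
        funext i; rfl
      rw [this, esymm, map_sum]
      apply Finset.sum_eq_zero
      intro s hs
      rw [map_prod]
      have hcard : s.card = (j : ℕ) + 1 := (Finset.mem_powersetCard.mp hs).2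
      have hne : s.Nonempty := Finset.card_pos.mp (by omega)
      obtain ⟨i, hi⟩ := hne
      exact Finset.prod_eq_zero hi (by simp)
  have h0 : φ (∑ i : Fin n, (X (Sum.inr i) : MvPolynomial (Fin n ⊕ Fin n) ℚ) ^ 3) = 0 :=
    hker hmem
  rw [map_sum] at h0
  simp only [map_pow, aeval_X, φ] at h0
  rw [sum_pow n hn 3 (by norm_num)] at h0
  norm_num at h0
end
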